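/- Let L be a standard diffusor on N and X a projectable complete vector field on N. Then 𝓛_X(Λ_L) ⊆ Λ_L if and only if there exists a smooth function μ with 𝓛_X(L) = μ L. -/

import Mathlib

/-- Partial derivative in the `P`-th coordinate direction on `N = ℝ^(n+1)`
(coordinate `0` is the time `t`). -/
noncomputable def pdi {n : ℕ} (P : Fin (n + 1)) (f : (Fin (n + 1) → ℝ) → ℝ) :
    (Fin (n + 1) → ℝ) → ℝ :=
  fun x => fderiv ℝ f x (Pi.single P 1)

/-- The second order operator on `N` with coefficients `A, b`. -/
noncomputable def diffusorOp {n : ℕ}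
    (A : (Fin (n + 1) → ℝ) → Fin (n + 1) → Fin (n + 1) → ℝ)
    (b : (Fin (n + 1) → ℝ) → Fin (n + 1) → ℝ) (f : (Fin (n + 1) → ℝ) → ℝ) :
    (Fin (n + 1) → ℝ) → ℝ :=
  fun x => (∑ P, ∑ Q, A x P Q * pdi P (pdi Q f) x) + ∑ P, b x P * pdi P f x

/-- Pairing `⟨λ, L⟩` between codiffusors and diffusors on `N`. -/
noncomputable def pairCD {n : ℕ} (l1 : (Fin (n + 1) → ℝ) → Fin (n + 1) → ℝ)
    (l2 : (Fin (n + 1) → ℝ) → Fin (n + 1) → Fin (n + 1) → ℝ)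
    (A : (Fin (n + 1) → ℝ) → Fin (n + 1) → Fin (n + 1) → ℝ)
    (b : (Fin (n + 1) → ℝ) → Fin (n + 1) → ℝ) : (Fin (n + 1) → ℝ) → ℝ :=
  fun x => (∑ P, l1 x P * b x P) + ∑ P, ∑ Q, l2 x P Q * A x P Q

/-- First-order components of the Lie derivative of a codiffusor along `X`. -/
noncomputable def lieCod1 {n : ℕ} (X : (Fin (n + 1) → ℝ) → Fin (n + 1) → ℝ)
    (l1 : (Fin (n + 1) → ℝ) → Fin (n + 1) → ℝ) (P : Fin (n + 1)) :
    (Fin (n + 1) → ℝ) → ℝ :=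
  fun x => (∑ K, X x K * pdi K (fun y => l1 y P) x)
    + ∑ K, l1 x K * pdi P (fun y => X y K) x

/-- Second-order components of the Lie derivative of a codiffusor along `X`. -/
noncomputable def lieCod2 {n : ℕ} (X : (Fin (n + 1) → ℝ) → Fin (n + 1) → ℝ)
    (l1 : (Fin (n + 1) → ℝ) → Fin (n + 1) → ℝ)
    (l2 : (Fin (n + 1) → ℝ) → Fin (n + 1) → Fin (n + 1) → ℝ)
    (P Q : Fin (n + 1)) : (Fin (n + 1) → ℝ) → ℝ :=
  fun x => (∑ K, X x K * pdi K (fun y => l2 y P Q) x)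
    + (∑ K, l2 x P K * pdi Q (fun y => X y K) x)
    + (∑ K, l2 x K Q * pdi P (fun y => X y K) x)
    + ∑ K, l1 x K * pdi P (pdi Q (fun y => X y K)) x

/-- Second-order coefficients of the Lie derivative `𝓛_X L` of a diffusor along `X`. -/
noncomputable def lieDifA {n : ℕ} (X : (Fin (n + 1) → ℝ) → Fin (n + 1) → ℝ)
    (A : (Fin (n + 1) → ℝ) → Fin (n + 1) → Fin (n + 1) → ℝ) (P Q : Fin (n + 1)) :
    (Fin (n + 1) → ℝ) → ℝ :=
  fun x => (∑ K, X x K * pdi K (fun y => A y P Q) x)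
    - (∑ K, A x P K * pdi K (fun y => X y Q) x)
    - ∑ K, A x K Q * pdi K (fun y => X y P) x

/-- First-order coefficients of the Lie derivative `𝓛_X L` of a diffusor along `X`. -/
noncomputable def lieDifb {n : ℕ} (X : (Fin (n + 1) → ℝ) → Fin (n + 1) → ℝ)
    (A : (Fin (n + 1) → ℝ) → Fin (n + 1) → Fin (n + 1) → ℝ)
    (b : (Fin (n + 1) → ℝ) → Fin (n + 1) → ℝ) (P : Fin (n + 1)) :
    (Fin (n + 1) → ℝ) → ℝ :=
  fun x => (∑ K, X x K * pdi K (fun y => b y P) x)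
    - (∑ K, b x K * pdi K (fun y => X y P) x)
    - ∑ J, ∑ K, A x J K * pdi J (pdi K (fun y => X y P)) x


lemma pdi_const (P : Fin (n+1)) (c : ℝ) (x : Fin (n+1) → ℝ) :
    pdi P (fun _ => c) x = 0 := by
  simp [pdi]

lemma pdi_add {f g : (Fin (n+1) → ℝ) → ℝ} {x : Fin (n+1) → ℝ}
    (hf : DifferentiableAt ℝ f x) (hg : DifferentiableAt ℝ g x) (P : Fin (n+1)) :
    pdi P (fun y => f y + g y) x = pdi P f x + pdi P g x := by
  simp [pdi, fderiv_fun_add hf hg]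

lemma pdi_mul {f g : (Fin (n+1) → ℝ) → ℝ} {x : Fin (n+1) → ℝ}
    (hf : DifferentiableAt ℝ f x) (hg : DifferentiableAt ℝ g x) (P : Fin (n+1)) :
    pdi P (fun y => f y * g y) x = pdi P f x * g x + f x * pdi P g x := by
  simp [pdi, fderiv_fun_mul hf hg, smul_eq_mul]
  ring

lemma pdi_finsum {ι : Type*} (s : Finset ι) (f : ι → (Fin (n+1) → ℝ) → ℝ)
    {x : Fin (n+1) → ℝ} (h : ∀ i ∈ s, DifferentiableAt ℝ (f i) x) (P : Fin (n+1)) :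
    pdi P (fun y => ∑ i ∈ s, f i y) x = ∑ i ∈ s, pdi P (f i) x := by
  simp [pdi, fderiv_fun_sum h]

lemma pdi_coord (P i : Fin (n+1)) (x : Fin (n+1) → ℝ) :
    pdi P (fun q => q i) x = (Pi.single P 1 : Fin (n+1) → ℝ) i := by
  have : (fun q : Fin (n+1) → ℝ => q i) = (ContinuousLinearMap.proj i :
      (Fin (n+1) → ℝ) →L[ℝ] ℝ) := rfl
  rw [pdi, this, ContinuousLinearMap.fderiv]
  rfl

lemma contDiff_pdi {f : (Fin (n+1) → ℝ) → ℝ} (hf : ContDiff ℝ (⊤ : ℕ∞) f) (P : Fin (n+1)) :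
    ContDiff ℝ (⊤ : ℕ∞) (pdi P f) := by
  exact (hf.fderiv_right (le_of_eq (by rw [← WithTop.coe_one, ← WithTop.coe_add, top_add]))).clm_apply contDiff_const


lemma sum2_swap {m : ℕ} (F : Fin m → Fin m → ℝ) :
    ∑ P, ∑ K, F P K = ∑ P, ∑ K, F K P := Finset.sum_comm

lemma sum3_comm12 {m : ℕ} (F : Fin m → Fin m → Fin m → ℝ) :
    ∑ P, ∑ Q, ∑ K, F P Q K = ∑ P, ∑ Q, ∑ K, F Q P K := Finset.sum_comm

lemma sum3_comm23 {m : ℕ} (F : Fin m → Fin m → Fin m → ℝ) :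
    ∑ P, ∑ Q, ∑ K, F P Q K = ∑ P, ∑ Q, ∑ K, F P K Q :=
  Finset.sum_congr rfl fun _ _ => Finset.sum_comm

lemma sum3_comm13 {m : ℕ} (F : Fin m → Fin m → Fin m → ℝ) :
    ∑ P, ∑ Q, ∑ K, F P Q K = ∑ P, ∑ Q, ∑ K, F K Q P := by
  rw [sum3_comm23 F, sum3_comm12, sum3_comm23]

lemma sum3_cyc {m : ℕ} (F : Fin m → Fin m → Fin m → ℝ) :
    ∑ P, ∑ Q, ∑ K, F P Q K = ∑ P, ∑ Q, ∑ K, F Q K P := by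
  rw [sum3_comm23 F, sum3_comm12]

lemma sum3_cyc' {m : ℕ} (F : Fin m → Fin m → Fin m → ℝ) :
    ∑ P, ∑ Q, ∑ K, F P Q K = ∑ P, ∑ Q, ∑ K, F K P Q := by
  rw [sum3_comm12 F, sum3_comm23]

lemma leib_alg {m : ℕ} (X l1 b : Fin m → ℝ) (dX dl1 db : Fin m → Fin m → ℝ)
    (l2 A : Fin m → Fin m → ℝ) (dl2 dA ddX : Fin m → Fin m → Fin m → ℝ) :
    (∑ P, ((∑ K, X K * dl1 P K) + ∑ K, l1 K * dX K P) * b P)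
    + (∑ P, ∑ Q, ((∑ K, X K * dl2 P Q K) + (∑ K, l2 P K * dX K Q)
        + (∑ K, l2 K Q * dX K P) + ∑ K, l1 K * ddX K P Q) * A P Q)
    + ((∑ P, l1 P * ((∑ K, X K * db P K) - (∑ K, b K * dX P K)
        - ∑ J, ∑ K, A J K * ddX P J K))
    + ∑ P, ∑ Q, l2 P Q * ((∑ K, X K * dA P Q K) - (∑ K, A P K * dX Q K)
        - ∑ K, A K Q * dX P K))
    = ∑ K, X K * ((∑ P, (dl1 P K * b P + l1 P * db P K))
        + ∑ P, ∑ Q, (dl2 P Q K * A P Q + l2 P Q * dA P Q K)) := by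
  simp only [Finset.mul_sum, Finset.sum_mul, mul_add, add_mul, mul_sub, sub_mul,
    Finset.sum_add_distrib, Finset.sum_sub_distrib]
  have e1 : (∑ P, ∑ K, X K * dl1 P K * b P) = ∑ K, ∑ P, X K * (dl1 P K * b P) := by
    rw [sum2_swap]
    exact Finset.sum_congr rfl fun _ _ => Finset.sum_congr rfl fun _ _ => by ring
  have e7 : (∑ P, ∑ K, l1 P * (X K * db P K)) = ∑ K, ∑ P, X K * (l1 P * db P K) := by
    rw [sum2_swap]
    exact Finset.sum_congr rfl fun _ _ => Finset.sum_congr rfl fun _ _ => by ring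
  have e2 : (∑ P, ∑ K, l1 P * (b K * dX P K)) = ∑ P, ∑ K, l1 K * dX K P * b P := by
    rw [sum2_swap]
    exact Finset.sum_congr rfl fun _ _ => Finset.sum_congr rfl fun _ _ => by ring
  have e3 : (∑ P, ∑ Q, ∑ K, X K * dl2 P Q K * A P Q)
      = ∑ K, ∑ P, ∑ Q, X K * (dl2 P Q K * A P Q) := by
    rw [sum3_cyc]
    exact Finset.sum_congr rfl fun _ _ => Finset.sum_congr rfl fun _ _ =>
      Finset.sum_congr rfl fun _ _ => by ring
  have e8 : (∑ P, ∑ Q, ∑ K, l2 P Q * (X K * dA P Q K))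
      = ∑ K, ∑ P, ∑ Q, X K * (l2 P Q * dA P Q K) := by
    rw [sum3_cyc]
    exact Finset.sum_congr rfl fun _ _ => Finset.sum_congr rfl fun _ _ =>
      Finset.sum_congr rfl fun _ _ => by ring
  have e4 : (∑ P, ∑ Q, ∑ K, l2 P Q * (A P K * dX Q K))
      = ∑ P, ∑ Q, ∑ K, l2 P K * dX K Q * A P Q := by
    rw [sum3_comm23]
    exact Finset.sum_congr rfl fun _ _ => Finset.sum_congr rfl fun _ _ =>
      Finset.sum_congr rfl fun _ _ => by ring
  have e5 : (∑ P, ∑ Q, ∑ K, l2 P Q * (A K Q * dX P K))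
      = ∑ P, ∑ Q, ∑ K, l2 K Q * dX K P * A P Q := by
    rw [sum3_comm13]
    exact Finset.sum_congr rfl fun _ _ => Finset.sum_congr rfl fun _ _ =>
      Finset.sum_congr rfl fun _ _ => by ring
  have e6 : (∑ P, ∑ Q, ∑ K, l1 P * (A Q K * ddX P Q K))
      = ∑ P, ∑ Q, ∑ K, l1 K * ddX K P Q * A P Q := by
    rw [sum3_cyc']
    exact Finset.sum_congr rfl fun _ _ => Finset.sum_congr rfl fun _ _ =>
      Finset.sum_congr rfl fun _ _ => by ring
  linarith [e1, e2, e3, e4, e5, e6, e7, e8]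

lemma leibniz {n : ℕ}
    (X l1 : (Fin (n+1) → ℝ) → Fin (n+1) → ℝ)
    (l2 A : (Fin (n+1) → ℝ) → Fin (n+1) → Fin (n+1) → ℝ)
    (b : (Fin (n+1) → ℝ) → Fin (n+1) → ℝ)
    (hl1 : ∀ P, ContDiff ℝ (⊤ : ℕ∞) (fun x => l1 x P))
    (hl2 : ∀ P Q, ContDiff ℝ (⊤ : ℕ∞) (fun x => l2 x P Q))
    (hA : ∀ P Q, ContDiff ℝ (⊤ : ℕ∞) (fun x => A x P Q))
    (hb : ∀ P, ContDiff ℝ (⊤ : ℕ∞) (fun x => b x P))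
    (x : Fin (n+1) → ℝ) :
    pairCD (fun y P => lieCod1 X l1 P y) (fun y P Q => lieCod2 X l1 l2 P Q y) A b x
      + pairCD l1 l2 (fun y P Q => lieDifA X A P Q y) (fun y P => lieDifb X A b P y) x
      = ∑ K, X x K * pdi K (pairCD l1 l2 A b) x := by
  have dl1 : ∀ P, DifferentiableAt ℝ (fun y => l1 y P) x :=
    fun P => ((hl1 P).differentiable (by simp)).differentiableAt
  have db : ∀ P, DifferentiableAt ℝ (fun y => b y P) x :=
    fun P => ((hb P).differentiable (by simp)).differentiableAt
  have dl2 : ∀ P Q, DifferentiableAt ℝ (fun y => l2 y P Q) x :=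
    fun P Q => ((hl2 P Q).differentiable (by simp)).differentiableAt
  have dA : ∀ P Q, DifferentiableAt ℝ (fun y => A y P Q) x :=
    fun P Q => ((hA P Q).differentiable (by simp)).differentiableAt
  have h1 : ∀ K : Fin (n+1), pdi K (fun y => ∑ P, l1 y P * b y P) x
      = ∑ P, (pdi K (fun y => l1 y P) x * b x P + l1 x P * pdi K (fun y => b y P) x) :=
    fun K => (pdi_finsum Finset.univ (fun P y => l1 y P * b y P)
      (fun P _ => (dl1 P).mul (db P)) K).trans
      (Finset.sum_congr rfl fun P _ => pdi_mul (dl1 P) (db P) K)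
  have h2 : ∀ K : Fin (n+1), pdi K (fun y => ∑ P, ∑ Q, l2 y P Q * A y P Q) x
      = ∑ P, ∑ Q, (pdi K (fun y => l2 y P Q) x * A x P Q
          + l2 x P Q * pdi K (fun y => A y P Q) x) :=
    fun K => (pdi_finsum Finset.univ (fun P y => ∑ Q, l2 y P Q * A y P Q)
      (fun P _ => DifferentiableAt.fun_sum (fun Q _ => (dl2 P Q).mul (dA P Q))) K).trans
      (Finset.sum_congr rfl fun P _ =>
        (pdi_finsum Finset.univ (fun Q y => l2 y P Q * A y P Q)
          (fun Q _ => (dl2 P Q).mul (dA P Q)) K).trans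
        (Finset.sum_congr rfl fun Q _ => pdi_mul (dl2 P Q) (dA P Q) K))
  have hd : ∀ K : Fin (n+1), pdi K (pairCD l1 l2 A b) x
      = (∑ P, (pdi K (fun y => l1 y P) x * b x P + l1 x P * pdi K (fun y => b y P) x))
        + ∑ P, ∑ Q, (pdi K (fun y => l2 y P Q) x * A x P Q
          + l2 x P Q * pdi K (fun y => A y P Q) x) := by
    intro K
    have e1 : pdi K (fun y => (∑ P, l1 y P * b y P) + ∑ P, ∑ Q, l2 y P Q * A y P Q) x
        = pdi K (fun y => ∑ P, l1 y P * b y P) x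
          + pdi K (fun y => ∑ P, ∑ Q, l2 y P Q * A y P Q) x :=
      pdi_add (DifferentiableAt.fun_sum fun P _ => (dl1 P).mul (db P))
        (DifferentiableAt.fun_sum fun P _ =>
          DifferentiableAt.fun_sum fun Q _ => (dl2 P Q).mul (dA P Q)) K
    have e0 : pdi K (pairCD l1 l2 A b) x
        = pdi K (fun y => (∑ P, l1 y P * b y P) + ∑ P, ∑ Q, l2 y P Q * A y P Q) x := rfl
    rw [e0, e1, h1 K, h2 K]
  have hrhs : ∑ K, X x K * pdi K (pairCD l1 l2 A b) x
      = ∑ K, X x K * ((∑ P, (pdi K (fun y => l1 y P) x * b x P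
            + l1 x P * pdi K (fun y => b y P) x))
        + ∑ P, ∑ Q, (pdi K (fun y => l2 y P Q) x * A x P Q
            + l2 x P Q * pdi K (fun y => A y P Q) x)) :=
    Finset.sum_congr rfl fun K _ => by rw [hd K]
  rw [hrhs]
  exact leib_alg (X x) (l1 x) (b x)
    (fun K P => pdi P (fun y => X y K) x)
    (fun P K => pdi K (fun y => l1 y P) x)
    (fun P K => pdi K (fun y => b y P) x)
    (l2 x) (A x)
    (fun P Q K => pdi K (fun y => l2 y P Q) x)
    (fun P Q K => pdi K (fun y => A y P Q) x)
    (fun K P Q => pdi P (pdi Q (fun y => X y K)) x)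

lemma sum_ite_mul' {m : ℕ} (P₀ : Fin m) (g : Fin m → ℝ) :
    ∑ P, (if P = P₀ then (1:ℝ) else 0) * g P = g P₀ := by
  simp [ite_mul]

lemma sum_ite2_mul {m : ℕ} (P₀ Q₀ : Fin m) (g : Fin m → Fin m → ℝ) :
    ∑ P, ∑ Q, (if P = P₀ then (1:ℝ) else 0) * (if Q = Q₀ then (1:ℝ) else 0) * g P Q
      = g P₀ Q₀ := by
  simp [ite_mul]

lemma std_b_one {n : ℕ}
    (A : (Fin (n + 1) → ℝ) → Fin (n + 1) → Fin (n + 1) → ℝ)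
    (b : (Fin (n + 1) → ℝ) → Fin (n + 1) → ℝ)
    (hstd : ∀ h : ℝ → ℝ, ContDiff ℝ (⊤ : ℕ∞) h →
      ∀ x, diffusorOp A b (fun q => h (q 0)) x = deriv h (x 0)) :
    ∀ x, b x 0 = 1 := by
  intro x
  have key : diffusorOp A b (fun q => q 0) x = b x 0 := by
    show (∑ P, ∑ Q, A x P Q * pdi P (pdi Q (fun q => q 0)) x)
        + (∑ P, b x P * pdi P (fun q => q 0) x) = b x 0
    have h1 : ∀ P Q : Fin (n+1), pdi P (pdi Q (fun q : Fin (n+1) → ℝ => q 0)) x = 0 := by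
      intro P Q
      have e : pdi Q (fun q : Fin (n+1) → ℝ => q 0)
          = fun _ => (Pi.single Q 1 : Fin (n+1) → ℝ) 0 := funext fun y => pdi_coord Q 0 y
      rw [e, pdi_const]
    have h2 : ∀ P : Fin (n+1), pdi P (fun q : Fin (n+1) → ℝ => q 0) x
        = if (0 : Fin (n+1)) = P then 1 else 0 := by
      intro P
      rw [pdi_coord]
      simp [Pi.single_apply]
    simp [h1, h2]
  have h := hstd (fun t => t) contDiff_id x
  rw [key] at h
  simpa using h

lemma lieDifA_symm {n : ℕ}
    (X : (Fin (n + 1) → ℝ) → Fin (n + 1) → ℝ)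
    (A : (Fin (n + 1) → ℝ) → Fin (n + 1) → Fin (n + 1) → ℝ)
    (hAsym : ∀ x P Q, A x P Q = A x Q P) (x : Fin (n+1) → ℝ) (P Q : Fin (n+1)) :
    lieDifA X A P Q x = lieDifA X A Q P x := by
  show (∑ K, X x K * pdi K (fun y => A y P Q) x)
      - (∑ K, A x P K * pdi K (fun y => X y Q) x)
      - (∑ K, A x K Q * pdi K (fun y => X y P) x)
    = (∑ K, X x K * pdi K (fun y => A y Q P) x)
      - (∑ K, A x Q K * pdi K (fun y => X y P) x)
      - (∑ K, A x K P * pdi K (fun y => X y Q) x)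
  have e1 : (fun y => A y P Q) = fun y => A y Q P := funext fun y => hAsym y P Q
  have e2 : (∑ K, A x P K * pdi K (fun y => X y Q) x)
      = ∑ K, A x K P * pdi K (fun y => X y Q) x :=
    Finset.sum_congr rfl fun K _ => by rw [hAsym x P K]
  have e3 : (∑ K, A x K Q * pdi K (fun y => X y P) x)
      = ∑ K, A x Q K * pdi K (fun y => X y P) x :=
    Finset.sum_congr rfl fun K _ => by rw [hAsym x K Q]
  rw [e1, e2, e3]
  ring

/-- Let `L` be a standard diffusor on `N` and `X` a projectable complete vector field.
Then `𝓛_X(Λ_L) ⊆ Λ_L` if and only if `𝓛_X(L) = μL` for some smooth `μ`. -/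
theorem lie_invariance_annihilator_iff {n : ℕ}
    (X : (Fin (n + 1) → ℝ) → Fin (n + 1) → ℝ)
    (A : (Fin (n + 1) → ℝ) → Fin (n + 1) → Fin (n + 1) → ℝ)
    (b : (Fin (n + 1) → ℝ) → Fin (n + 1) → ℝ)
    (hX : ∀ P, ContDiff ℝ (⊤ : ℕ∞) (fun x => X x P))
    -- `X` is projectable: its time component depends only on time.
    (hproj : ∀ x y, x 0 = y 0 → X x 0 = X y 0)
    (hA : ∀ P Q, ContDiff ℝ (⊤ : ℕ∞) (fun x => A x P Q))
    (hb : ∀ P, ContDiff ℝ (⊤ : ℕ∞) (fun x => b x P))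
    (hAsym : ∀ x P Q, A x P Q = A x Q P)
    -- `L` is standard: on functions depending only on time, `L(g) = dg/dt`.
    (hstd : ∀ h : ℝ → ℝ, ContDiff ℝ (⊤ : ℕ∞) h →
      ∀ x, diffusorOp A b (fun q => h (q 0)) x = deriv h (x 0)) :
    (∀ (l1 : (Fin (n + 1) → ℝ) → Fin (n + 1) → ℝ)
        (l2 : (Fin (n + 1) → ℝ) → Fin (n + 1) → Fin (n + 1) → ℝ),
      (∀ P, ContDiff ℝ (⊤ : ℕ∞) (fun x => l1 x P)) →
      (∀ P Q, ContDiff ℝ (⊤ : ℕ∞) (fun x => l2 x P Q)) →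
      (∀ x P Q, l2 x P Q = l2 x Q P) →
      (∀ x, pairCD l1 l2 A b x = 0) →
      (∀ x, pairCD (fun y P => lieCod1 X l1 P y)
          (fun y P Q => lieCod2 X l1 l2 P Q y) A b x = 0))
    ↔ ∃ μ : (Fin (n + 1) → ℝ) → ℝ, ContDiff ℝ (⊤ : ℕ∞) μ ∧
        (∀ x P Q, lieDifA X A P Q x = μ x * A x P Q) ∧
        (∀ x P, lieDifb X A b P x = μ x * b x P) := by
  have hb0 : ∀ x, b x 0 = 1 := std_b_one A b hstd
  constructor
  · intro hyp
    -- the key step: every constant-coefficient style codiffusor annihilating L at x₀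
    -- also annihilates 𝓛_X L at x₀
    have main : ∀ (x₀ : Fin (n+1) → ℝ) (m1 : Fin (n+1) → ℝ)
        (m2 : Fin (n+1) → Fin (n+1) → ℝ), (∀ P Q, m2 P Q = m2 Q P) →
        ((∑ P, m1 P * b x₀ P) + (∑ P, ∑ Q, m2 P Q * A x₀ P Q)) = 0 →
        (∑ P, m1 P * lieDifb X A b P x₀)
          + (∑ P, ∑ Q, m2 P Q * lieDifA X A P Q x₀) = 0 := by
      intro x₀ m1 m2 hsym h0
      set F : (Fin (n+1) → ℝ) → ℝ :=
        fun y => (∑ P, m1 P * b y P) + ∑ P, ∑ Q, m2 P Q * A y P Q with hFdef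
      have hFsm : ContDiff ℝ (⊤ : ℕ∞) F := by
        rw [hFdef]
        exact (ContDiff.sum fun P _ => contDiff_const.mul (hb P)).add
          (ContDiff.sum fun P _ => ContDiff.sum fun Q _ => contDiff_const.mul (hA P Q))
      set l1 : (Fin (n+1) → ℝ) → Fin (n+1) → ℝ :=
        fun y P => m1 P - F y * (if P = 0 then (1:ℝ) else 0) with hl1def
      set l2 : (Fin (n+1) → ℝ) → Fin (n+1) → Fin (n+1) → ℝ :=
        fun _ P Q => m2 P Q with hl2def
      have hl1 : ∀ P, ContDiff ℝ (⊤ : ℕ∞) (fun x => l1 x P) := by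
        intro P
        simp only [hl1def]
        exact contDiff_const.sub (hFsm.mul contDiff_const)
      have hl2 : ∀ P Q, ContDiff ℝ (⊤ : ℕ∞) (fun x => l2 x P Q) := by
        intro P Q
        simp only [hl2def]
        exact contDiff_const
      have hl2sym : ∀ x P Q, l2 x P Q = l2 x Q P := by
        intro x P Q
        simp only [hl2def]
        exact hsym P Q
      have hann : ∀ y, pairCD l1 l2 A b y = 0 := by
        intro y
        have e0 : pairCD l1 l2 A b y
            = (∑ P, l1 y P * b y P) + (∑ P, ∑ Q, l2 y P Q * A y P Q) := rfl
        rw [e0]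
        simp only [hl1def, hl2def]
        have e1 : (∑ P, (m1 P - F y * (if P = 0 then (1:ℝ) else 0)) * b y P)
            = (∑ P, m1 P * b y P)
              - ∑ P, (if P = 0 then (1:ℝ) else 0) * (F y * b y P) := by
          rw [← Finset.sum_sub_distrib]
          exact Finset.sum_congr rfl fun P _ => by ring
        rw [e1, sum_ite_mul' (0 : Fin (n+1)) (fun P => F y * b y P), hb0 y, mul_one]
        have e2 : F y = (∑ P, m1 P * b y P) + ∑ P, ∑ Q, m2 P Q * A y P Q := by
          rw [hFdef]
        linarith [e2]
      have hann' := hyp l1 l2 hl1 hl2 hl2sym hann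
      have hleib := leibniz X l1 l2 A b hl1 hl2 hA hb x₀
      have hz : ∀ K : Fin (n+1), pdi K (pairCD l1 l2 A b) x₀ = 0 := by
        intro K
        rw [show pairCD l1 l2 A b = fun _ => (0:ℝ) from funext hann]
        exact pdi_const K 0 x₀
      rw [hann' x₀] at hleib
      simp only [hz, mul_zero, Finset.sum_const_zero] at hleib
      have hfin : (∑ P, l1 x₀ P * lieDifb X A b P x₀)
          + (∑ P, ∑ Q, l2 x₀ P Q * lieDifA X A P Q x₀) = 0 := by
        have e : pairCD l1 l2 (fun y P Q => lieDifA X A P Q y)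
              (fun y P => lieDifb X A b P y) x₀
            = (∑ P, l1 x₀ P * lieDifb X A b P x₀)
              + (∑ P, ∑ Q, l2 x₀ P Q * lieDifA X A P Q x₀) := rfl
        linarith [hleib, e]
      have hFx0 : F x₀ = 0 := by rw [hFdef]; exact h0
      have e2 : (∑ P, l1 x₀ P * lieDifb X A b P x₀)
          = ∑ P, m1 P * lieDifb X A b P x₀ := by
        simp only [hl1def]
        rw [hFx0]
        exact Finset.sum_congr rfl fun P _ => by ring
      have e3 : (∑ P, ∑ Q, l2 x₀ P Q * lieDifA X A P Q x₀)
          = ∑ P, ∑ Q, m2 P Q * lieDifA X A P Q x₀ := by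
        simp only [hl2def]
      linarith [hfin, e2, e3]
    refine ⟨fun x => lieDifb X A b 0 x, ?_, ?_, ?_⟩
    · show ContDiff ℝ (⊤ : ℕ∞) (fun x => (∑ K, X x K * pdi K (fun y => b y 0) x)
        - (∑ K, b x K * pdi K (fun y => X y 0) x)
        - ∑ J, ∑ K, A x J K * pdi J (pdi K (fun y => X y 0)) x)
      exact ((ContDiff.sum fun K _ => (hX K).mul (contDiff_pdi (hb 0) K)).sub
        (ContDiff.sum fun K _ => (hb K).mul (contDiff_pdi (hX 0) K))).sub
        (ContDiff.sum fun J _ => ContDiff.sum fun K _ =>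
          (hA J K).mul (contDiff_pdi (contDiff_pdi (hX 0) K) J))
    · intro x P Q
      set m1 : Fin (n+1) → ℝ :=
        fun P' => (-(2 * A x P Q)) * (if P' = 0 then (1:ℝ) else 0) with hm1
      set m2 : Fin (n+1) → Fin (n+1) → ℝ :=
        fun P' Q' => (if P' = P then (1:ℝ) else 0) * (if Q' = Q then (1:ℝ) else 0)
          + (if P' = Q then (1:ℝ) else 0) * (if Q' = P then (1:ℝ) else 0) with hm2
      have key : ∀ g : Fin (n+1) → Fin (n+1) → ℝ,
          (∑ P', ∑ Q', m2 P' Q' * g P' Q') = g P Q + g Q P := by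
        intro g
        have e : ∀ P' Q' : Fin (n+1), m2 P' Q' * g P' Q'
            = (if P' = P then (1:ℝ) else 0) * (if Q' = Q then (1:ℝ) else 0) * g P' Q'
              + (if P' = Q then (1:ℝ) else 0) * (if Q' = P then (1:ℝ) else 0) * g P' Q' := by
          intro P' Q'
          simp only [hm2]
          ring
        calc (∑ P', ∑ Q', m2 P' Q' * g P' Q')
            = ∑ P', ∑ Q',
              ((if P' = P then (1:ℝ) else 0) * (if Q' = Q then (1:ℝ) else 0) * g P' Q'
              + (if P' = Q then (1:ℝ) else 0) * (if Q' = P then (1:ℝ) else 0) * g P' Q') :=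
              Finset.sum_congr rfl fun P' _ => Finset.sum_congr rfl fun Q' _ => e P' Q'
          _ = g P Q + g Q P := by
              simp only [Finset.sum_add_distrib]
              rw [sum_ite2_mul, sum_ite2_mul]
      have keyb : ∀ g : Fin (n+1) → ℝ,
          (∑ P', m1 P' * g P') = (-(2 * A x P Q)) * g 0 := by
        intro g
        have e : ∀ P' : Fin (n+1), m1 P' * g P'
            = (if P' = 0 then (1:ℝ) else 0) * ((-(2 * A x P Q)) * g P') := by
          intro P'
          simp only [hm1]
          ring
        rw [Finset.sum_congr rfl fun P' _ => e P',
          sum_ite_mul' (0 : Fin (n+1)) (fun P' => (-(2 * A x P Q)) * g P')]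
      have hsym' : ∀ P' Q', m2 P' Q' = m2 Q' P' := by
        intro P' Q'
        simp only [hm2]
        ring
      have h0 : (∑ P', m1 P' * b x P') + (∑ P', ∑ Q', m2 P' Q' * A x P' Q') = 0 := by
        rw [keyb (b x), key (A x), hb0 x, hAsym x Q P]
        ring
      have h := main x m1 m2 hsym' h0
      rw [keyb (fun P' => lieDifb X A b P' x), key (fun P' Q' => lieDifA X A P' Q' x)] at h
      have h' : (-(2 * A x P Q)) * lieDifb X A b 0 x
          + (lieDifA X A P Q x + lieDifA X A Q P x) = 0 := h
      have hsymA := lieDifA_symm X A hAsym x P Q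
      show lieDifA X A P Q x = lieDifb X A b 0 x * A x P Q
      linear_combination h' / 2 + hsymA / 2
    · intro x P
      set m1 : Fin (n+1) → ℝ :=
        fun P' => (if P' = P then (1:ℝ) else 0) - b x P * (if P' = 0 then (1:ℝ) else 0)
        with hm1
      have keyb : ∀ g : Fin (n+1) → ℝ,
          (∑ P', m1 P' * g P') = g P - b x P * g 0 := by
        intro g
        have e : ∀ P' : Fin (n+1), m1 P' * g P'
            = (if P' = P then (1:ℝ) else 0) * g P'
              - (if P' = 0 then (1:ℝ) else 0) * (b x P * g P') := by
          intro P'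
          simp only [hm1]
          ring
        rw [Finset.sum_congr rfl fun P' _ => e P', Finset.sum_sub_distrib,
          sum_ite_mul' P g, sum_ite_mul' (0 : Fin (n+1)) (fun P' => b x P * g P')]
      have h0 : (∑ P', m1 P' * b x P')
          + (∑ P', ∑ Q', (fun _ _ : Fin (n+1) => (0:ℝ)) P' Q' * A x P' Q') = 0 := by
        rw [keyb (b x), hb0 x]
        simp
      have h := main x m1 (fun _ _ => 0) (fun _ _ => rfl) h0
      rw [keyb (fun P' => lieDifb X A b P' x)] at h
      have h' : (lieDifb X A b P x - b x P * lieDifb X A b 0 x)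
          + (∑ P' : Fin (n+1), ∑ Q' : Fin (n+1), (0:ℝ) * lieDifA X A P' Q' x) = 0 := h
      show lieDifb X A b P x = lieDifb X A b 0 x * b x P
      have hzz : (∑ P' : Fin (n+1), ∑ Q' : Fin (n+1), (0:ℝ) * lieDifA X A P' Q' x) = 0 := by
        simp
      linear_combination h' - hzz
  · rintro ⟨μ, hμ, hLA, hLb⟩ l1 l2 hl1 hl2 hsym hann x
    have hleib := leibniz X l1 l2 A b hl1 hl2 hA hb x
    have hz : ∀ K : Fin (n+1), pdi K (pairCD l1 l2 A b) x = 0 := by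
      intro K
      rw [show pairCD l1 l2 A b = fun _ => (0:ℝ) from funext hann]
      exact pdi_const K 0 x
    simp only [hz, mul_zero, Finset.sum_const_zero] at hleib
    have e : pairCD l1 l2 (fun y P Q => lieDifA X A P Q y)
          (fun y P => lieDifb X A b P y) x = 0 := by
      show (∑ P, l1 x P * lieDifb X A b P x)
        + (∑ P, ∑ Q, l2 x P Q * lieDifA X A P Q x) = 0
      have h1 : (∑ P, l1 x P * lieDifb X A b P x) = μ x * ∑ P, l1 x P * b x P := by
        rw [Finset.mul_sum]
        exact Finset.sum_congr rfl fun P _ => by rw [hLb x P]; ring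
      have h2 : (∑ P, ∑ Q, l2 x P Q * lieDifA X A P Q x)
          = μ x * ∑ P, ∑ Q, l2 x P Q * A x P Q := by
        rw [Finset.mul_sum]
        refine Finset.sum_congr rfl fun P _ => ?_
        rw [Finset.mul_sum]
        exact Finset.sum_congr rfl fun Q _ => by rw [hLA x P Q]; ring
      have h3 : (∑ P, l1 x P * b x P) + (∑ P, ∑ Q, l2 x P Q * A x P Q) = 0 := hann x
      rw [h1, h2, ← mul_add, h3, mul_zero]
    linarith [hleib, e]
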